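/- Let $G$ be an abelian group and $A \leq G$ a subgroup such that every element of $A$ has order dividing 2 and every element of the quotient $G/A$ has order dividing 2. If $G$ contains no element of order 4, then $G$ is isomorphic to $A \oplus (G/A)$. -/
import Mathlib

/-- If `A ≤ G` with both `A` and `G/A` of exponent dividing 2, and `G`
has no element of order 4, then `G ≅ A ⊕ G/A`. -/
theorem stmt5 {G : Type*} [AddCommGroup G] (A : AddSubgroup G)
    (hA : ∀ a : A, 2 • a = 0) (hQ : ∀ x : G ⧸ A, 2 • x = 0)
    (h4 : ¬ ∃ g : G, addOrderOf g = 4) :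
    Nonempty (G ≃+ A × (G ⧸ A)) := by
  -- every element of G has order dividing 2
  have h2 : ∀ g : G, 2 • g = 0 := by
    intro g
    by_contra hg
    have hmem : (2 : ℕ) • g ∈ A := by
      have := hQ (QuotientAddGroup.mk g)
      rwa [← QuotientAddGroup.mk_nsmul, QuotientAddGroup.eq_zero_iff] at this
    have h4g : (4 : ℕ) • g = 0 := by
      have := hA ⟨2 • g, hmem⟩
      have h22 : (2 : ℕ) • (2 : ℕ) • g = 0 := congrArg (Subtype.val) this
      rw [show (4 : ℕ) = 2 * 2 from rfl, mul_smul]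
      exact h22
    have hdvd : addOrderOf g ∣ 4 := addOrderOf_dvd_of_nsmul_eq_zero h4g
    have hnd : ¬ addOrderOf g ∣ 2 := by
      intro h
      exact hg (addOrderOf_dvd_iff_nsmul_eq_zero.mp h)
    have hle := Nat.le_of_dvd (by norm_num) hdvd
    have hpos : 0 < addOrderOf g := Nat.pos_of_dvd_of_pos hdvd (by norm_num)
    interval_cases hh : addOrderOf g <;> simp_all <;> omega
  letI : Module (ZMod 2) G := AddCommGroup.zmodModule h2
  let p : Submodule (ZMod 2) G := AddSubgroup.toZModSubmodule 2 A
  obtain ⟨q, hq⟩ := Submodule.exists_isCompl p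
  let e1 : (p × q) ≃ₗ[ZMod 2] G := Submodule.prodEquivOfIsCompl p q hq
  let e2 : q ≃ₗ[ZMod 2] G ⧸ p := (Submodule.quotientEquivOfIsCompl p q hq).symm
  have hGA : (G ⧸ p) ≃+ (G ⧸ A) := by
    exact QuotientAddGroup.quotientAddEquivOfEq (AddSubgroup.toZModSubmodule_toAddSubgroup 2 A)
  refine ⟨?_⟩
  exact e1.symm.toAddEquiv.trans
    ((AddEquiv.refl _).prodCongr (e2.toAddEquiv.trans hGA))
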